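/- arXiv:2303.07148 — 3 statements merged into one kernel-verified Lean document; each statement's English description precedes it below -/
import Mathlib

section
/- Let Θ be a causally complete space of input histories over (E, I) with outputs O, and let (Θ'_k)_{k maximal in Ext(Θ)} be a family of causally complete spaces of input histories, each over a set of events disjoint from E, with output family O' over the union of their events (writing O'_k for its restriction to the events of Θ'_k). Let Θ ⤳ Θ̲' := Θ ∪ ⋃_{k maximal in Ext(Θ)} {k ∨ h' : h' ∈ Θ'_k} be the conditional sequential composition. Then the map sending a pair (f, (f'_k)_{k maximal in Ext(Θ)}) with f ∈ CausFun(Θ,O) and f'_k ∈ CausFun(Θ'_k, O'_k) to the function on Θ ⤳ Θ̲' defined by h ↦ f(h) for h ∈ Θ and k ∨ h' ↦ f'_k(h') for k maximal in Ext(Θ) and h' ∈ Θ'_k is a well-defined bijection onto CausFun(Θ ⤳ Θ̲', O ⊔ O'); in particular CausFun(Θ ⤳ Θ̲', O ⊔ O') ≅ CausFun(Θ,O) × ∏_{k maximal in Ext(Θ)} CausFun(Θ'_k, O'_k). -/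
/-!
Every history of `Θ ⤳ Θ̲'` either lies in `Θ`, hence has all its events in `E₁`, or is `k ∨ h'`,
from which `k` and `h'` are recovered as the restrictions to `E₁` and to its complement. Under
this decomposition tips are computed in `Θ` resp. `Θ'_k`, and an extended input history of the
composition restricts on `E₁` to one of `Θ` and, if it has an event outside `E₁`, to a maximal
`k` together with an extended input history of `Θ'_k`. So consistent extended functions on `Θ`
and on the `Θ'_k` glue to consistent extended functions on the composition, and conversely
restrict. Hence `h, h'` are constrained at `ω` in the composition iff both lie in `Θ` and are
constrained there, or both are of the form `k ∨ ·` for the same `k` and their second parts are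
constrained in `Θ'_k`. Causal functions therefore split and glue bijectively.
-/

namespace Caus

/-- Partial functions over events `E` with value family `V`:
each event is assigned an optional value. -/
abbrev PF (E : Type) (V : E → Type) : Type := ∀ ω : E, Option (V ω)

variable {E : Type} {I O : E → Type}

/-- The total function `k` viewed as a partial function with full domain. -/
def toPF (k : ∀ ω : E, I ω) : PF E I := fun ω => some (k ω)

/-- Domain of a partial function. -/
def dom (h : PF E I) : Set E := {ω | (h ω).isSome}

/-- The order on partial functions: `h' ≤ h` iff `dom h' ⊆ dom h` and they agree on `dom h'`. -/
def le (h' h : PF E I) : Prop := ∀ ω : E, (h' ω).isSome → h' ω = h ω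

/-- Compatibility: agreeing on the intersection of the domains. -/
def Compat (h h' : PF E I) : Prop :=
  ∀ ω : E, (h ω).isSome → (h' ω).isSome → h ω = h' ω

/-- Join of two partial functions (union, when they are compatible). -/
def join (h h' : PF E I) : PF E I := fun ω => (h ω).orElse fun _ => h' ω

/-- `k` is the join (union) of the set `S` of partial functions. -/
def IsJoinOf (k : PF E I) (S : Set (PF E I)) : Prop :=
  ∀ (ω : E) (x : I ω), k ω = some x ↔ ∃ h ∈ S, h ω = some x

/-- `Ext Θ`: joins of nonempty pairwise-compatible subsets of `Θ`. -/
def Ext (Θ : Set (PF E I)) : Set (PF E I) :=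
  {k | ∃ S ⊆ Θ, S.Nonempty ∧ S.Pairwise Compat ∧ IsJoinOf k S}

/-- A space of input histories: every `h ∈ Θ` is ∨-prime in `Ext Θ`. -/
def IsSpace (Θ : Set (PF E I)) : Prop :=
  ∀ h ∈ Θ, ∀ k ∈ Ext Θ, ∀ k' ∈ Ext Θ, Compat k k' →
    le h (join k k') → le h k ∨ le h k'

/-- Tip events of `h` in `Θ`. -/
def tips (Θ : Set (PF E I)) (h : PF E I) : Set E :=
  {ω | ω ∈ dom h ∧ ∀ h' ∈ Θ, le h' h → h' ≠ h → ω ∉ dom h'}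

/-- Extended functions: the output partial function has the same domain as the input. -/
def IsExtFun (Θ : Set (PF E I)) (F : PF E I → PF E O) : Prop :=
  ∀ k ∈ Ext Θ, dom (F k) = dom k

/-- The consistency condition for extended functions. -/
def Consistent (Θ : Set (PF E I)) (F : PF E I → PF E O) : Prop :=
  ∀ k ∈ Ext Θ, ∀ k' ∈ Ext Θ, le k' k → le (F k') (F k)

/-- `h` and `h'` are constrained at `ω`: both have tip `ω` and every consistent
extended function with binary outputs takes the same value at `ω` on them. -/
def Constr (Θ : Set (PF E I)) (ω : E) (h h' : PF E I) : Prop :=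
  h ∈ Θ ∧ h' ∈ Θ ∧ ω ∈ tips Θ h ∧ ω ∈ tips Θ h' ∧
  ∀ F : PF E I → PF E (fun _ => Bool),
    IsExtFun Θ F → Consistent Θ F → F h ω = F h' ω

/-- Causal function conditions: `f h` is an assignment of outputs to the tips of `h`,
with equal outputs on histories constrained at an event. -/
def IsCausFun (Θ : Set (PF E I)) (f : PF E I → PF E O) : Prop :=
  (∀ h ∈ Θ, dom (f h) = tips Θ h) ∧
  ∀ (ω : E) (h h' : PF E I), Constr Θ ω h h' → f h ω = f h' ω

/-- Causal functions for `Θ` with outputs `W` (normalized to `none` outside `Θ`). -/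
def CausFunSet (Θ : Set (PF E I)) (W : E → Type) : Set (PF E I → PF E W) :=
  {f | IsCausFun Θ f ∧ ∀ h ∉ Θ, ∀ ω : E, f h ω = none}

open Classical in
/-- The extended causal function `Ext f` of a causal function `f`. -/
noncomputable def extCF (Θ : Set (PF E I)) (f : PF E I → PF E O) : PF E I → PF E O :=
  fun k ω =>
    if hh : ∃ h, h ∈ Θ ∧ le h k ∧ ω ∈ tips Θ h then f hh.choose ω else none

open Classical in
/-- `Prime F̂`: the causal function underlying a consistent extended function. -/
noncomputable def primeCF (Θ : Set (PF E I)) (F : PF E I → PF E O) : PF E I → PF E O :=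
  fun h ω => if h ∈ Θ ∧ ω ∈ tips Θ h then F h ω else none

open Classical in
/-- Restriction of a causal function to a lowerset (normalized outside it). -/
noncomputable def restrictCF (lam : Set (PF E I)) (f : PF E I → PF E O) :
    PF E I → PF E O :=
  fun h => if h ∈ lam then f h else fun _ => none

/-- The free-choice condition. -/
def FreeChoice (Θ : Set (PF E I)) : Prop := ∀ k : ∀ ω : E, I ω, toPF k ∈ Ext Θ

/-- Tightness. -/
def Tight (Θ : Set (PF E I)) : Prop :=
  ∀ k ∈ Ext Θ, ∀ ω ∈ dom k, ∃! h, h ∈ Θ ∧ le h k ∧ ω ∈ tips Θ h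

/-- Maximal extended input histories. -/
def maxExt (Θ : Set (PF E I)) : Set (PF E I) :=
  {k | k ∈ Ext Θ ∧ ∀ k' ∈ Ext Θ, le k k' → k' = k}

/-- Lowersets (downward-closed subsets) of a space `Θ`. -/
def IsLowersetOf (Θ lam : Set (PF E I)) : Prop :=
  lam ⊆ Θ ∧ ∀ h ∈ lam, ∀ h' ∈ Θ, le h' h → h' ∈ lam


/-- Causal completeness: every history has exactly one tip event. -/
def CausallyComplete (Θ : Set (PF E I)) : Prop :=
  ∀ h ∈ Θ, ∃ ω : E, tips Θ h = {ω}

/-- Conditional sequential composition `Θ ⤳ Θ̲'`. -/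
def cseqComp (Θ : Set (PF E I)) (Θ' : PF E I → Set (PF E I)) : Set (PF E I) :=
  Θ ∪ {g | ∃ k ∈ maxExt Θ, ∃ h' ∈ Θ' k, g = join k h'}

/-- Families `(f'_k)_k` of causal functions on the spaces `Θ'_k`, indexed by the
maximal extended input histories of `Θ` (normalized outside the index set). -/
def cseqFamSet (Θ : Set (PF E I)) (Θ' : PF E I → Set (PF E I)) (W : E → Type) :
    Set (PF E I → (PF E I → PF E W)) :=
  {F | (∀ k ∈ maxExt Θ, F k ∈ CausFunSet (Θ' k) W) ∧
       ∀ k ∉ maxExt Θ, F k = fun _ _ => none}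

open Classical in
/-- Restriction of a partial function to a set of events. -/
noncomputable def restrictTo (A : Set E) {V : E → Type} (h : PF E V) : PF E V :=
  fun ω => if ω ∈ A then h ω else none

open Classical in
/-- Restriction of a partial function to the complement of a set of events. -/
noncomputable def restrictCompl (A : Set E) {V : E → Type} (h : PF E V) : PF E V :=
  fun ω => if ω ∈ A then none else h ω

open Classical in
/-- Gluing of a pair `(f, (f'_k)_k)` to a function on `Θ ⤳ Θ̲'`. -/
noncomputable def cseqGlue (Θ : Set (PF E I)) (Θ' : PF E I → Set (PF E I)) (E₁ : Set E)
    (p : (PF E I → PF E O) × (PF E I → (PF E I → PF E O))) : PF E I → PF E O :=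
  fun g =>
    if g ∈ Θ then p.1 g
    else if g ∈ cseqComp Θ Θ' then p.2 (restrictTo E₁ g) (restrictCompl E₁ g)
    else fun _ => none

theorem le_iff {h' h : PF E I} : le h' h ↔ ∀ ω x, h' ω = some x → h ω = some x := by
  refine ⟨fun hle ω x hx => ?_, fun hle ω hs => ?_⟩
  · rw [← hle ω (by simp [hx]), hx]
  · obtain ⟨x, hx⟩ := Option.isSome_iff_exists.mp hs
    rw [hx, hle ω x hx]

theorem le.refl (h : PF E I) : le h h := fun _ _ => rfl

theorem le.trans {a b c : PF E I} (hab : le a b) (hbc : le b c) : le a c := by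
  rw [le_iff] at *
  exact fun ω x hx => hbc ω x (hab ω x hx)

theorem notMem_dom {h : PF E I} {ω : E} : ω ∉ dom h ↔ h ω = none := by
  simp [dom]

theorem mem_dom_of_le {h' h : PF E I} (hle : le h' h) {ω : E} (hω : ω ∈ dom h') :
    ω ∈ dom h := by
  simpa [dom, hle ω hω] using hω

theorem dom_join (a b : PF E I) : dom (join a b) = dom a ∪ dom b := by
  ext ω
  cases ha : a ω <;> simp [dom, join, ha]

theorem join_apply_of_notMem_dom {a : PF E I} (b : PF E I) {ω : E} (hω : ω ∉ dom a) :
    join a b ω = b ω := by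
  simp [join, notMem_dom.mp hω]

theorem le_join_left (a b : PF E I) : le a (join a b) := by
  rw [le_iff]
  intro ω x hx
  simp [join, hx]

theorem join_mono_right (a : PF E I) {b b' : PF E I} (hle : le b b') :
    le (join a b) (join a b') := by
  rw [le_iff] at *
  intro ω x hx
  cases ha : a ω <;> simp_all [join]

theorem compat_of_le {a b c : PF E I} (hac : le a c) (hbc : le b c) : Compat a b :=
  fun ω ha hb => (hac ω ha).trans (hbc ω hb).symm

theorem mem_ext_iff {Θ : Set (PF E I)} {k : PF E I} :
    k ∈ Ext Θ ↔ (∃ t ∈ Θ, le t k) ∧ ∀ ω x, k ω = some x → ∃ t ∈ Θ, le t k ∧ t ω = some x := by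
  constructor
  · rintro ⟨S, hSΘ, ⟨s, hs⟩, -, hj⟩
    have hle : ∀ t ∈ S, le t k := fun t ht => le_iff.mpr fun ω x hx => (hj ω x).mpr ⟨t, ht, hx⟩
    refine ⟨⟨s, hSΘ hs, hle s hs⟩, fun ω x hx => ?_⟩
    obtain ⟨t, ht, htx⟩ := (hj ω x).mp hx
    exact ⟨t, hSΘ ht, hle t ht, htx⟩
  · rintro ⟨⟨s, hs, hsk⟩, hcover⟩
    refine ⟨{t | t ∈ Θ ∧ le t k}, fun t ht => ht.1, ⟨s, hs, hsk⟩,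
      fun a ha b hb _ => compat_of_le ha.2 hb.2, fun ω x => ⟨fun hx => ?_, ?_⟩⟩
    · obtain ⟨t, ht, htk, htx⟩ := hcover ω x hx
      exact ⟨t, ⟨ht, htk⟩, htx⟩
    · rintro ⟨t, ⟨-, htk⟩, htx⟩
      exact le_iff.mp htk ω x htx

theorem mem_ext_of_mem {Θ : Set (PF E I)} {h : PF E I} (hh : h ∈ Θ) : h ∈ Ext Θ :=
  mem_ext_iff.mpr ⟨⟨h, hh, le.refl h⟩, fun _ _ hx => ⟨h, hh, le.refl h, hx⟩⟩

theorem ext_mono {Θ₁ Θ₂ : Set (PF E I)} (hsub : Θ₁ ⊆ Θ₂) : Ext Θ₁ ⊆ Ext Θ₂ := by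
  rintro k ⟨S, hS, hne, hpw, hj⟩
  exact ⟨S, hS.trans hsub, hne, hpw, hj⟩

theorem ext_ext_subset (Θ : Set (PF E I)) : Ext (Ext Θ) ⊆ Ext Θ := by
  intro k hk
  obtain ⟨⟨s, hs, hsk⟩, hcover⟩ := mem_ext_iff.mp hk
  obtain ⟨⟨t, ht, hts⟩, -⟩ := mem_ext_iff.mp hs
  refine mem_ext_iff.mpr ⟨⟨t, ht, hts.trans hsk⟩, fun ω x hx => ?_⟩
  obtain ⟨s, hs, hsk, hsx⟩ := hcover ω x hx
  obtain ⟨t, ht, hts, htx⟩ := (mem_ext_iff.mp hs).2 ω x hsx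
  exact ⟨t, ht, hts.trans hsk, htx⟩

theorem dom_subset_of_mem_ext {Θ : Set (PF E I)} {A : Set E} (hd : ∀ h ∈ Θ, dom h ⊆ A)
    {k : PF E I} (hk : k ∈ Ext Θ) : dom k ⊆ A := by
  intro ω hω
  obtain ⟨x, hx⟩ := Option.isSome_iff_exists.mp hω
  obtain ⟨t, ht, -, htx⟩ := (mem_ext_iff.mp hk).2 ω x hx
  exact hd t ht (by simp [dom, htx])

theorem tips_eq_of_forall_le_mem {Θ Θ₂ : Set (PF E I)} {h : PF E I} (hsub : Θ ⊆ Θ₂)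
    (hbelow : ∀ g ∈ Θ₂, le g h → g ∈ Θ) : tips Θ₂ h = tips Θ h := by
  ext ω
  exact and_congr_right fun _ =>
    ⟨fun H g hg => H g (hsub hg), fun H g hg hle => H g (hbelow g hg hle) hle⟩

theorem restrictTo_mono (A : Set E) {m' m : PF E I} (hle : le m' m) :
    le (restrictTo A m') (restrictTo A m) := by
  rw [le_iff] at *
  intro ω x hx
  by_cases hω : ω ∈ A <;> simp_all [restrictTo]

theorem restrictCompl_mono (A : Set E) {m' m : PF E I} (hle : le m' m) :
    le (restrictCompl A m') (restrictCompl A m) := by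
  rw [le_iff] at *
  intro ω x hx
  by_cases hω : ω ∈ A <;> simp_all [restrictCompl]

theorem restrictTo_eq_self {A : Set E} {h : PF E I} (hd : dom h ⊆ A) : restrictTo A h = h := by
  funext ω
  by_cases hω : ω ∈ A
  · simp [restrictTo, hω]
  · simp [restrictTo, hω, notMem_dom.mp fun hωh => hω (hd hωh)]

theorem restrictTo_join {A : Set E} {k h : PF E I} (hk : dom k ⊆ A) (hh : Disjoint (dom h) A) :
    restrictTo A (join k h) = k := by
  funext ω
  by_cases hω : ω ∈ A
  · have : h ω = none := notMem_dom.mp fun hωh => Set.disjoint_left.mp hh hωh hω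
    cases hkω : k ω <;> simp [restrictTo, join, hω, hkω, this]
  · simp [restrictTo, hω, notMem_dom.mp fun hωk => hω (hk hωk)]

theorem restrictCompl_join {A : Set E} {k h : PF E I} (hk : dom k ⊆ A)
    (hh : Disjoint (dom h) A) : restrictCompl A (join k h) = h := by
  funext ω
  by_cases hω : ω ∈ A
  · simp [restrictCompl, hω, notMem_dom.mp fun hωh => Set.disjoint_left.mp hh hωh hω]
  · simp [restrictCompl, join, hω, notMem_dom.mp fun hωk => hω (hk hωk)]

theorem restrictTo_mem_ext_image (A : Set E) {S : Set (PF E I)} {m : PF E I}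
    (hm : m ∈ Ext S) : restrictTo A m ∈ Ext (restrictTo A '' S) := by
  obtain ⟨⟨s, hs, hsm⟩, hcover⟩ := mem_ext_iff.mp hm
  refine mem_ext_iff.mpr ⟨⟨_, ⟨s, hs, rfl⟩, restrictTo_mono A hsm⟩, fun ω x hx => ?_⟩
  by_cases hω : ω ∈ A
  · simp only [restrictTo, hω, if_true] at hx
    obtain ⟨s, hs, hsm, hsx⟩ := hcover ω x hx
    exact ⟨_, ⟨s, hs, rfl⟩, restrictTo_mono A hsm, by simp [restrictTo, hω, hsx]⟩
  · simp [restrictTo, hω] at hx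

theorem join_mem_cseqComp {Θ : Set (PF E I)} {Θ' : PF E I → Set (PF E I)} {k h : PF E I}
    (hk : k ∈ maxExt Θ) (hh : h ∈ Θ' k) : join k h ∈ cseqComp Θ Θ' :=
  Or.inr ⟨k, hk, h, hh, rfl⟩

theorem join_mem_ext_cseqComp {Θ : Set (PF E I)} {Θ' : PF E I → Set (PF E I)} {k n : PF E I}
    (hk : k ∈ maxExt Θ) (hn : n ∈ Ext (Θ' k)) : join k n ∈ Ext (cseqComp Θ Θ') := by
  obtain ⟨⟨t, ht, htn⟩, hcover⟩ := mem_ext_iff.mp hn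
  refine mem_ext_iff.mpr ⟨⟨_, join_mem_cseqComp hk ht, join_mono_right k htn⟩, fun ω x hx => ?_⟩
  cases hkω : k ω with
  | some y =>
    obtain ⟨t, ht, htk, hty⟩ := (mem_ext_iff.mp hk.1).2 ω y hkω
    obtain rfl : y = x := by simpa [join, hkω] using hx
    exact ⟨t, Or.inl ht, htk.trans (le_join_left k n), hty⟩
  | none =>
    rw [join_apply_of_notMem_dom n (notMem_dom.mpr hkω)] at hx
    obtain ⟨t, ht, htn, htx⟩ := hcover ω x hx
    exact ⟨join k t, join_mem_cseqComp hk ht, join_mono_right k htn,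
      by rwa [join_apply_of_notMem_dom t (notMem_dom.mpr hkω)]⟩

theorem IsExtFun.mono {Θ₁ Θ₂ : Set (PF E I)} {F : PF E I → PF E O} (hsub : Θ₁ ⊆ Θ₂)
    (hF : IsExtFun Θ₂ F) : IsExtFun Θ₁ F :=
  fun k hk => hF k (ext_mono hsub hk)

theorem Consistent.mono {Θ₁ Θ₂ : Set (PF E I)} {F : PF E I → PF E O} (hsub : Θ₁ ⊆ Θ₂)
    (hF : Consistent Θ₂ F) : Consistent Θ₁ F :=
  fun k hk k' hk' => hF k (ext_mono hsub hk) k' (ext_mono hsub hk')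

def constExt (o : ∀ ω, O ω) : PF E I → PF E O := fun m ω => (m ω).map fun _ => o ω

theorem isExtFun_constExt (Θ : Set (PF E I)) (o : ∀ ω, O ω) : IsExtFun Θ (constExt o) :=
  fun m _ => by ext ω; simp [constExt, dom]

theorem consistent_constExt (Θ : Set (PF E I)) (o : ∀ ω, O ω) : Consistent Θ (constExt o) :=
  fun m _ m' _ hle ω hω => by
    simp only [constExt, Option.isSome_map] at hω ⊢
    rw [hle ω hω]

open Classical in
/-- Off `E₁` the value is masked by `m`: `F₂ k` is only controlled on `Ext (Θ' k)` for maximal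
`k`, and `restrictCompl E₁ m` lies there only when `m` has events outside `E₁`. -/
noncomputable def extGlue (E₁ : Set E) (F₁ : PF E I → PF E O) (F₂ : PF E I → PF E I → PF E O) :
    PF E I → PF E O :=
  fun m ω => if ω ∈ E₁ then F₁ (restrictTo E₁ m) ω
    else (m ω).bind fun _ => F₂ (restrictTo E₁ m) (restrictCompl E₁ m) ω

def extPullback (k : PF E I) (F : PF E I → PF E O) : PF E I → PF E O :=
  fun n ω => (n ω).bind fun _ => F (join k n) ω

theorem isExtFun_extPullback {Θ : Set (PF E I)} {Θ' : PF E I → Set (PF E I)} {k : PF E I}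
    {F : PF E I → PF E O} (hk : k ∈ maxExt Θ) (hF : IsExtFun (cseqComp Θ Θ') F) :
    IsExtFun (Θ' k) (extPullback k F) := by
  intro n hn
  ext ω
  cases hn' : n ω with
  | none => simp [extPullback, dom, hn']
  | some y =>
    have : ω ∈ dom (F (join k n)) := by
      rw [hF _ (join_mem_ext_cseqComp hk hn), dom_join]
      exact Or.inr (by simp [dom, hn'])
    simpa [extPullback, dom, hn'] using this

theorem consistent_extPullback {Θ : Set (PF E I)} {Θ' : PF E I → Set (PF E I)} {k : PF E I}
    {F : PF E I → PF E O} (hk : k ∈ maxExt Θ) (hF : Consistent (cseqComp Θ Θ') F) :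
    Consistent (Θ' k) (extPullback k F) := by
  intro n hn n' hn' hle ω hω
  obtain ⟨y, hy⟩ : ∃ y, n' ω = some y := by
    cases hy : n' ω <;> simp_all [extPullback]
  simp only [extPullback, hy, le_iff.mp hle ω y hy, Option.bind_some] at hω ⊢
  exact hF _ (join_mem_ext_cseqComp hk hn) _ (join_mem_ext_cseqComp hk hn')
    (join_mono_right k hle) ω hω

theorem restrictCF_comp_mem_causFunSet {Θ₁ Θ₂ : Set (PF E I)} {G : PF E I → PF E O}
    (hG : G ∈ CausFunSet Θ₂ O) {φ : PF E I → PF E I}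
    (hφ : ∀ h ∈ Θ₁, φ h ∈ Θ₂ ∧ tips Θ₂ (φ h) = tips Θ₁ h)
    (hconstr : ∀ ω h h₂, Constr Θ₁ ω h h₂ → Constr Θ₂ ω (φ h) (φ h₂)) :
    restrictCF Θ₁ (fun h => G (φ h)) ∈ CausFunSet Θ₁ O := by
  refine ⟨⟨fun h hh => ?_, fun ω h h₂ hc => ?_⟩, fun h hh ω => by simp [restrictCF, hh]⟩
  · simp only [restrictCF, if_pos hh]
    rw [hG.1.1 _ (hφ h hh).1, (hφ h hh).2]
  · simp only [restrictCF, if_pos hc.1, if_pos hc.2.1]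
    exact hG.1.2 ω _ _ (hconstr ω h h₂ hc)

theorem cseqGlue_of_mem {Θ : Set (PF E I)} (Θ' : PF E I → Set (PF E I)) (E₁ : Set E)
    (p : (PF E I → PF E O) × (PF E I → PF E I → PF E O)) {h : PF E I} (hh : h ∈ Θ) :
    cseqGlue Θ Θ' E₁ p h = p.1 h :=
  if_pos hh

theorem cseqGlue_of_notMem {Θ : Set (PF E I)} {Θ' : PF E I → Set (PF E I)} (E₁ : Set E)
    (p : (PF E I → PF E O) × (PF E I → PF E I → PF E O)) {g : PF E I}
    (hg : g ∉ cseqComp Θ Θ') : cseqGlue Θ Θ' E₁ p g = fun _ => none := by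
  simp [cseqGlue, hg, show g ∉ Θ from fun hgΘ => hg (Or.inl hgΘ)]

open Classical in
noncomputable def cseqSplit (Θ : Set (PF E I)) (Θ' : PF E I → Set (PF E I))
    (G : PF E I → PF E O) : (PF E I → PF E O) × (PF E I → PF E I → PF E O) :=
  (restrictCF Θ G, fun k =>
    if k ∈ maxExt Θ then restrictCF (Θ' k) fun h => G (join k h) else fun _ _ => none)

structure IsCseqSplit (E₁ : Set E) (Θ : Set (PF E I)) (Θ' : PF E I → Set (PF E I)) : Prop where
  dom_subset : ∀ h ∈ Θ, dom h ⊆ E₁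
  dom_nonempty : ∀ k ∈ maxExt Θ, ∀ h ∈ Θ' k, (dom h).Nonempty
  disjoint_dom : ∀ k ∈ maxExt Θ, ∀ h ∈ Θ' k, Disjoint (dom h) E₁

namespace IsCseqSplit

variable {E₁ : Set E} {Θ : Set (PF E I)} {Θ' : PF E I → Set (PF E I)}
  {F₁ : PF E I → PF E O} {F₂ : PF E I → PF E I → PF E O}

theorem dom_subset_of_mem_ext (hs : IsCseqSplit E₁ Θ Θ') {k : PF E I} (hk : k ∈ Ext Θ) :
    dom k ⊆ E₁ :=
  Caus.dom_subset_of_mem_ext hs.dom_subset hk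

theorem restrictTo_join (hs : IsCseqSplit E₁ Θ Θ') {k h : PF E I} (hk : k ∈ maxExt Θ)
    (hh : h ∈ Θ' k) : restrictTo E₁ (join k h) = k :=
  Caus.restrictTo_join (hs.dom_subset_of_mem_ext hk.1) (hs.disjoint_dom k hk h hh)

theorem restrictCompl_join (hs : IsCseqSplit E₁ Θ Θ') {k h : PF E I} (hk : k ∈ maxExt Θ)
    (hh : h ∈ Θ' k) : restrictCompl E₁ (join k h) = h :=
  Caus.restrictCompl_join (hs.dom_subset_of_mem_ext hk.1) (hs.disjoint_dom k hk h hh)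

theorem join_apply_of_notMem (hs : IsCseqSplit E₁ Θ Θ') {k : PF E I} (hk : k ∈ Ext Θ)
    (h : PF E I) {ω : E} (hω : ω ∉ E₁) : join k h ω = h ω :=
  join_apply_of_notMem_dom h fun hωk => hω (hs.dom_subset_of_mem_ext hk hωk)

theorem exists_mem_dom_join_notMem (hs : IsCseqSplit E₁ Θ Θ') {k h : PF E I}
    (hk : k ∈ maxExt Θ) (hh : h ∈ Θ' k) : ∃ ω ∈ dom (join k h), ω ∉ E₁ := by
  obtain ⟨ω, hω⟩ := hs.dom_nonempty k hk h hh
  exact ⟨ω, (dom_join k h).symm ▸ Or.inr hω, Set.disjoint_left.mp (hs.disjoint_dom k hk h hh) hω⟩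

theorem join_notMem (hs : IsCseqSplit E₁ Θ Θ') {k h : PF E I} (hk : k ∈ maxExt Θ)
    (hh : h ∈ Θ' k) : join k h ∉ Θ := fun hmem => by
  obtain ⟨ω, hω, hω₁⟩ := hs.exists_mem_dom_join_notMem hk hh
  exact hω₁ (hs.dom_subset _ hmem hω)

theorem eq_and_le_of_join_le (hs : IsCseqSplit E₁ Θ Θ') {k h k₂ h₂ : PF E I}
    (hk : k ∈ maxExt Θ) (hh : h ∈ Θ' k) (hk₂ : k₂ ∈ maxExt Θ) (hh₂ : h₂ ∈ Θ' k₂)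
    (hle : le (join k₂ h₂) (join k h)) : k₂ = k ∧ le h₂ h := by
  have hfst := restrictTo_mono E₁ hle
  have hsnd := restrictCompl_mono E₁ hle
  rw [hs.restrictTo_join hk hh, hs.restrictTo_join hk₂ hh₂] at hfst
  rw [hs.restrictCompl_join hk hh, hs.restrictCompl_join hk₂ hh₂] at hsnd
  exact ⟨(hk₂.2 k hk.1 hfst).symm, hsnd⟩

theorem tips_of_mem (hs : IsCseqSplit E₁ Θ Θ') {h : PF E I} (hh : h ∈ Θ) :
    tips (cseqComp Θ Θ') h = tips Θ h := by
  refine tips_eq_of_forall_le_mem Set.subset_union_left fun g hg hle => hg.resolve_right ?_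
  rintro ⟨k, hk, h', hh', rfl⟩
  obtain ⟨ω, hω, hω₁⟩ := hs.exists_mem_dom_join_notMem hk hh'
  exact hω₁ (hs.dom_subset h hh (mem_dom_of_le hle hω))

theorem tips_join (hs : IsCseqSplit E₁ Θ Θ') {k h : PF E I} (hk : k ∈ maxExt Θ)
    (hh : h ∈ Θ' k) : tips (cseqComp Θ Θ') (join k h) = tips (Θ' k) h := by
  ext ω
  constructor
  · rintro ⟨hω, htip⟩
    have hωk : ω ∉ dom k := by
      intro hωk
      obtain ⟨x, hx⟩ := Option.isSome_iff_exists.mp hωk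
      obtain ⟨t, ht, htk, htx⟩ := (mem_ext_iff.mp hk.1).2 ω x hx
      refine htip t (Or.inl ht) (htk.trans (le_join_left k h)) ?_ (by simp [dom, htx])
      rintro rfl
      exact hs.join_notMem hk hh ht
    refine ⟨((dom_join k h).subset hω).resolve_left hωk, fun h₂ hh₂ hle hne hω₂ => ?_⟩
    refine htip _ (join_mem_cseqComp hk hh₂) (join_mono_right k hle) (fun heq => hne ?_)
      ((dom_join k h₂).symm ▸ Or.inr hω₂)
    rw [← hs.restrictCompl_join hk hh₂, heq, hs.restrictCompl_join hk hh]
  · rintro ⟨hω, htip⟩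
    have hω₁ : ω ∉ E₁ := Set.disjoint_left.mp (hs.disjoint_dom k hk h hh) hω
    refine ⟨(dom_join k h).symm ▸ Or.inr hω, ?_⟩
    rintro g (hg | ⟨k₂, hk₂, h₂, hh₂, rfl⟩) hle hne hωg
    · exact hω₁ (hs.dom_subset g hg hωg)
    · obtain ⟨rfl, hle₂⟩ := hs.eq_and_le_of_join_le hk hh hk₂ hh₂ hle
      rw [dom_join] at hωg
      rcases hωg with hωk | hωh₂
      · exact hω₁ (hs.dom_subset_of_mem_ext hk.1 hωk)
      · exact htip h₂ hh₂ hle₂ (fun heq => hne (heq ▸ rfl)) hωh₂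

theorem restrictTo_image_subset (hs : IsCseqSplit E₁ Θ Θ') :
    restrictTo E₁ '' cseqComp Θ Θ' ⊆ Ext Θ := by
  rintro _ ⟨g, hg | ⟨k, hk, h, hh, rfl⟩, rfl⟩
  · rw [restrictTo_eq_self (hs.dom_subset g hg)]
    exact mem_ext_of_mem hg
  · rw [hs.restrictTo_join hk hh]
    exact hk.1

theorem restrictTo_mem_ext (hs : IsCseqSplit E₁ Θ Θ') {m : PF E I}
    (hm : m ∈ Ext (cseqComp Θ Θ')) : restrictTo E₁ m ∈ Ext Θ :=
  ext_ext_subset Θ (ext_mono hs.restrictTo_image_subset (restrictTo_mem_ext_image E₁ hm))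

theorem restrictTo_eq_of_join_le (hs : IsCseqSplit E₁ Θ Θ') {m k h : PF E I}
    (hm : m ∈ Ext (cseqComp Θ Θ')) (hk : k ∈ maxExt Θ) (hh : h ∈ Θ' k)
    (hle : le (join k h) m) : restrictTo E₁ m = k :=
  hk.2 _ (hs.restrictTo_mem_ext hm) (hs.restrictTo_join hk hh ▸ restrictTo_mono E₁ hle)

theorem exists_join_le (hs : IsCseqSplit E₁ Θ Θ') {m : PF E I}
    (hm : m ∈ Ext (cseqComp Θ Θ')) {ω : E} {x : I ω} (hx : m ω = some x) (hω : ω ∉ E₁) :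
    restrictTo E₁ m ∈ maxExt Θ ∧
      ∃ h ∈ Θ' (restrictTo E₁ m), le (join (restrictTo E₁ m) h) m ∧ h ω = some x := by
  obtain ⟨g, hg, hgm, hgx⟩ := (mem_ext_iff.mp hm).2 ω x hx
  rcases hg with hg | ⟨k, hk, h, hh, rfl⟩
  · exact absurd (hs.dom_subset g hg (by simp [dom, hgx])) hω
  rw [hs.restrictTo_eq_of_join_le hm hk hh hgm]
  exact ⟨hk, h, hh, hgm, by rwa [hs.join_apply_of_notMem hk.1 h hω] at hgx⟩

theorem restrictTo_mem_maxExt (hs : IsCseqSplit E₁ Θ Θ') {m : PF E I}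
    (hm : m ∈ Ext (cseqComp Θ Θ')) {ω : E} (hω : ω ∈ dom m) (hω₁ : ω ∉ E₁) :
    restrictTo E₁ m ∈ maxExt Θ := by
  obtain ⟨x, hx⟩ := Option.isSome_iff_exists.mp hω
  exact (hs.exists_join_le hm hx hω₁).1

theorem restrictCompl_mem_ext (hs : IsCseqSplit E₁ Θ Θ') {m : PF E I}
    (hm : m ∈ Ext (cseqComp Θ Θ')) {ω : E} (hω : ω ∈ dom m) (hω₁ : ω ∉ E₁) :
    restrictCompl E₁ m ∈ Ext (Θ' (restrictTo E₁ m)) := by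
  obtain ⟨x, hx⟩ := Option.isSome_iff_exists.mp hω
  obtain ⟨hk, h, hh, hle, -⟩ := hs.exists_join_le hm hx hω₁
  have le_restrictCompl_of_join_le : ∀ {h}, h ∈ Θ' (restrictTo E₁ m) →
      le (join (restrictTo E₁ m) h) m → le h (restrictCompl E₁ m) := fun hh hle =>
    hs.restrictCompl_join hk hh ▸ restrictCompl_mono E₁ hle
  refine mem_ext_iff.mpr ⟨⟨h, hh, le_restrictCompl_of_join_le hh hle⟩, fun ω' x' hx' => ?_⟩
  have hω' : ω' ∉ E₁ := fun hω' => by simp [restrictCompl, hω'] at hx'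
  rw [restrictCompl, if_neg hω'] at hx'
  obtain ⟨-, h', hh', hle', hx''⟩ := hs.exists_join_le hm hx' hω'
  exact ⟨h', hh', le_restrictCompl_of_join_le hh' hle', hx''⟩

theorem restrictTo_eq_of_le (hs : IsCseqSplit E₁ Θ Θ') {m' m : PF E I}
    (hm' : m' ∈ Ext (cseqComp Θ Θ')) (hm : m ∈ Ext (cseqComp Θ Θ')) (hle : le m' m)
    {ω : E} (hω : ω ∈ dom m') (hω₁ : ω ∉ E₁) : restrictTo E₁ m' = restrictTo E₁ m :=
  ((hs.restrictTo_mem_maxExt hm' hω hω₁).2 _ (hs.restrictTo_mem_ext hm)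
    (restrictTo_mono E₁ hle)).symm

theorem isExtFun_extGlue (hs : IsCseqSplit E₁ Θ Θ') (hF₁ : IsExtFun Θ F₁)
    (hF₂ : ∀ k ∈ maxExt Θ, IsExtFun (Θ' k) (F₂ k)) :
    IsExtFun (cseqComp Θ Θ') (extGlue E₁ F₁ F₂) := by
  intro m hm
  ext ω
  by_cases hω₁ : ω ∈ E₁
  · have := congrArg (ω ∈ ·) (hF₁ _ (hs.restrictTo_mem_ext hm))
    simpa [extGlue, hω₁, dom, restrictTo] using this
  · cases hx : m ω with
    | none => simp [extGlue, dom, hω₁, hx]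
    | some x =>
      have hω : ω ∈ dom m := by simp [dom, hx]
      have hmem : ω ∈ dom (F₂ (restrictTo E₁ m) (restrictCompl E₁ m)) := by
        rw [hF₂ _ (hs.restrictTo_mem_maxExt hm hω hω₁) _ (hs.restrictCompl_mem_ext hm hω hω₁)]
        simp [dom, restrictCompl, hω₁, hx]
      simpa [extGlue, dom, hω₁, hx] using hmem

theorem consistent_extGlue (hs : IsCseqSplit E₁ Θ Θ') (hF₁ : Consistent Θ F₁)
    (hF₂ : ∀ k ∈ maxExt Θ, Consistent (Θ' k) (F₂ k)) :
    Consistent (cseqComp Θ Θ') (extGlue E₁ F₁ F₂) := by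
  intro m hm m' hm' hle ω hω
  by_cases hω₁ : ω ∈ E₁
  · simp only [extGlue, if_pos hω₁] at hω ⊢
    exact hF₁ _ (hs.restrictTo_mem_ext hm) _ (hs.restrictTo_mem_ext hm')
      (restrictTo_mono E₁ hle) ω hω
  · simp only [extGlue, if_neg hω₁] at hω ⊢
    obtain ⟨x, hx⟩ : ∃ x, m' ω = some x := by
      cases hx : m' ω <;> simp_all
    have hωm' : ω ∈ dom m' := by simp [dom, hx]
    have hωm : ω ∈ dom m := mem_dom_of_le hle hωm'
    have hk := hs.restrictTo_eq_of_le hm' hm hle hωm' hω₁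
    rw [hx, Option.bind_some, hk] at hω
    rw [hx, le_iff.mp hle ω x hx, Option.bind_some, Option.bind_some, hk]
    exact hF₂ _ (hs.restrictTo_mem_maxExt hm hωm hω₁) _ (hs.restrictCompl_mem_ext hm hωm hω₁) _
      (hk ▸ hs.restrictCompl_mem_ext hm' hωm' hω₁) (restrictCompl_mono E₁ hle) ω hω

theorem extGlue_of_mem (hs : IsCseqSplit E₁ Θ Θ') {h : PF E I} (hh : h ∈ Θ) {ω : E}
    (hω : ω ∈ E₁) : extGlue E₁ F₁ F₂ h ω = F₁ h ω := by
  simp [extGlue, hω, restrictTo_eq_self (hs.dom_subset h hh)]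

theorem extGlue_join (hs : IsCseqSplit E₁ Θ Θ') {k h : PF E I} (hk : k ∈ maxExt Θ)
    (hh : h ∈ Θ' k) {ω : E} (hω : ω ∈ dom h) : extGlue E₁ F₁ F₂ (join k h) ω = F₂ k h ω := by
  have hω₁ : ω ∉ E₁ := Set.disjoint_left.mp (hs.disjoint_dom k hk h hh) hω
  obtain ⟨x, hx⟩ := Option.isSome_iff_exists.mp hω
  simp [extGlue, hω₁, hs.restrictTo_join hk hh, hs.restrictCompl_join hk hh,
    hs.join_apply_of_notMem hk.1 h hω₁, hx]

theorem constr_cseqComp_iff (hs : IsCseqSplit E₁ Θ Θ') {ω : E} {h h₂ : PF E I} (hh : h ∈ Θ)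
    (hh₂ : h₂ ∈ Θ) : Constr (cseqComp Θ Θ') ω h h₂ ↔ Constr Θ ω h h₂ := by
  simp only [Constr, hs.tips_of_mem hh, hs.tips_of_mem hh₂]
  refine ⟨fun ⟨_, _, ht, ht₂, hF⟩ => ⟨hh, hh₂, ht, ht₂, fun F hFe hFc => ?_⟩,
    fun ⟨_, _, ht, ht₂, hF⟩ => ⟨Or.inl hh, Or.inl hh₂, ht, ht₂, fun F hFe hFc =>
      hF F (hFe.mono Set.subset_union_left) (hFc.mono Set.subset_union_left)⟩⟩
  have hω : ω ∈ E₁ := hs.dom_subset h hh ht.1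
  have := hF (extGlue E₁ F fun _ => constExt fun _ => true)
    (hs.isExtFun_extGlue hFe fun _ _ => isExtFun_constExt _ _)
    (hs.consistent_extGlue hFc fun _ _ => consistent_constExt _ _)
  rwa [hs.extGlue_of_mem hh hω, hs.extGlue_of_mem hh₂ hω] at this

open Classical in
theorem constr_cseqComp_join_iff (hs : IsCseqSplit E₁ Θ Θ') {k : PF E I} (hk : k ∈ maxExt Θ)
    {ω : E} {h h₂ : PF E I} (hh : h ∈ Θ' k) (hh₂ : h₂ ∈ Θ' k) :
    Constr (cseqComp Θ Θ') ω (join k h) (join k h₂) ↔ Constr (Θ' k) ω h h₂ := by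
  simp only [Constr, hs.tips_join hk hh, hs.tips_join hk hh₂]
  refine ⟨fun ⟨_, _, ht, ht₂, hF⟩ => ⟨hh, hh₂, ht, ht₂, fun F hFe hFc => ?_⟩,
    fun ⟨_, _, ht, ht₂, hF⟩ => ⟨join_mem_cseqComp hk hh, join_mem_cseqComp hk hh₂, ht, ht₂,
      fun F hFe hFc => ?_⟩⟩
  · have := hF (extGlue E₁ (constExt fun _ => true)
        fun k' => if k' = k then F else constExt fun _ => true)
      (hs.isExtFun_extGlue (isExtFun_constExt _ _) fun k' _ => by
        split_ifs with hkk
        · exact hkk ▸ hFe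
        · exact isExtFun_constExt _ _)
      (hs.consistent_extGlue (consistent_constExt _ _) fun k' _ => by
        split_ifs with hkk
        · exact hkk ▸ hFc
        · exact consistent_constExt _ _)
    rwa [hs.extGlue_join hk hh ht.1, hs.extGlue_join hk hh₂ ht₂.1, if_pos rfl] at this
  · obtain ⟨x, hx⟩ := Option.isSome_iff_exists.mp ht.1
    obtain ⟨x₂, hx₂⟩ := Option.isSome_iff_exists.mp ht₂.1
    simpa [extPullback, hx, hx₂] using
      hF (extPullback k F) (isExtFun_extPullback hk hFe) (consistent_extPullback hk hFc)

theorem not_constr_cseqComp_join (hs : IsCseqSplit E₁ Θ Θ') {k k₂ h h₂ : PF E I}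
    (hk : k ∈ maxExt Θ) (hh : h ∈ Θ' k) (hk₂ : k₂ ∈ maxExt Θ) (hh₂ : h₂ ∈ Θ' k₂)
    (hne : k ≠ k₂) {ω : E} : ¬ Constr (cseqComp Θ Θ') ω (join k h) (join k₂ h₂) := by
  classical
  rintro ⟨-, -, ht, ht₂, hF⟩
  rw [hs.tips_join hk hh] at ht
  rw [hs.tips_join hk₂ hh₂] at ht₂
  have := hF (extGlue E₁ (constExt fun _ => true) fun k' => constExt fun _ => decide (k' = k))
    (hs.isExtFun_extGlue (isExtFun_constExt _ _) fun _ _ => isExtFun_constExt _ _)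
    (hs.consistent_extGlue (consistent_constExt _ _) fun _ _ => consistent_constExt _ _)
  rw [hs.extGlue_join hk hh ht.1, hs.extGlue_join hk₂ hh₂ ht₂.1] at this
  obtain ⟨x, hx⟩ := Option.isSome_iff_exists.mp ht.1
  obtain ⟨x₂, hx₂⟩ := Option.isSome_iff_exists.mp ht₂.1
  simp [constExt, hx, hx₂, Ne.symm hne] at this

theorem mem_iff_of_mem_tips (hs : IsCseqSplit E₁ Θ Θ') {g : PF E I} (hg : g ∈ cseqComp Θ Θ')
    {ω : E} (hω : ω ∈ tips (cseqComp Θ Θ') g) : ω ∈ E₁ ↔ g ∈ Θ := by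
  rcases hg with hg | ⟨k, hk, h, hh, rfl⟩
  · rw [hs.tips_of_mem hg] at hω
    exact iff_of_true (hs.dom_subset g hg hω.1) hg
  · rw [hs.tips_join hk hh] at hω
    exact iff_of_false (Set.disjoint_left.mp (hs.disjoint_dom k hk h hh) hω.1)
      (hs.join_notMem hk hh)

theorem constr_cseqComp_cases (hs : IsCseqSplit E₁ Θ Θ') {ω : E} {g g₂ : PF E I}
    (hc : Constr (cseqComp Θ Θ') ω g g₂) :
    (g ∈ Θ ∧ g₂ ∈ Θ ∧ Constr Θ ω g g₂) ∨
      ∃ k ∈ maxExt Θ, ∃ h ∈ Θ' k, ∃ h₂ ∈ Θ' k,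
        g = join k h ∧ g₂ = join k h₂ ∧ Constr (Θ' k) ω h h₂ := by
  have hsame : g ∈ Θ ↔ g₂ ∈ Θ :=
    (hs.mem_iff_of_mem_tips hc.1 hc.2.2.1).symm.trans (hs.mem_iff_of_mem_tips hc.2.1 hc.2.2.2.1)
  rcases hc.1 with hg | ⟨k, hk, h, hh, rfl⟩
  · have hg₂ := hsame.mp hg
    exact Or.inl ⟨hg, hg₂, (hs.constr_cseqComp_iff hg hg₂).mp hc⟩
  · rcases hc.2.1 with hg₂ | ⟨k₂, hk₂, h₂, hh₂, rfl⟩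
    · exact absurd (hsame.mpr hg₂) (hs.join_notMem hk hh)
    obtain rfl : k = k₂ := by
      by_contra hne
      exact hs.not_constr_cseqComp_join hk hh hk₂ hh₂ hne hc
    exact Or.inr ⟨k, hk, h, hh, h₂, hh₂, rfl, rfl, (hs.constr_cseqComp_join_iff hk hh hh₂).mp hc⟩

theorem cseqGlue_join (hs : IsCseqSplit E₁ Θ Θ')
    (p : (PF E I → PF E O) × (PF E I → PF E I → PF E O)) {k h : PF E I} (hk : k ∈ maxExt Θ)
    (hh : h ∈ Θ' k) : cseqGlue Θ Θ' E₁ p (join k h) = p.2 k h := by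
  simp [cseqGlue, hs.join_notMem hk hh, join_mem_cseqComp hk hh, hs.restrictTo_join hk hh,
    hs.restrictCompl_join hk hh]

theorem mapsTo_cseqGlue (hs : IsCseqSplit E₁ Θ Θ') :
    Set.MapsTo (cseqGlue Θ Θ' E₁) (CausFunSet Θ O ×ˢ cseqFamSet Θ Θ' O)
      (CausFunSet (cseqComp Θ Θ') O) := by
  rintro ⟨f, F⟩ ⟨⟨⟨hfdom, hfconstr⟩, -⟩, hF, -⟩
  refine ⟨⟨?_, fun ω g g₂ hc => ?_⟩, fun g hg ω => by rw [cseqGlue_of_notMem E₁ _ hg]⟩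
  · rintro g (hg | ⟨k, hk, h, hh, rfl⟩)
    · rw [cseqGlue_of_mem Θ' E₁ _ hg, hs.tips_of_mem hg]
      exact hfdom g hg
    · rw [hs.cseqGlue_join _ hk hh, hs.tips_join hk hh]
      exact (hF k hk).1.1 h hh
  · rcases hs.constr_cseqComp_cases hc with
      ⟨hg, hg₂, hcΘ⟩ | ⟨k, hk, h, hh, h₂, hh₂, rfl, rfl, hcΘ'⟩
    · rw [cseqGlue_of_mem Θ' E₁ _ hg, cseqGlue_of_mem Θ' E₁ _ hg₂]
      exact hfconstr ω g g₂ hcΘ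
    · rw [hs.cseqGlue_join _ hk hh, hs.cseqGlue_join _ hk hh₂]
      exact (hF k hk).1.2 ω h h₂ hcΘ'

theorem mapsTo_cseqSplit (hs : IsCseqSplit E₁ Θ Θ') :
    Set.MapsTo (cseqSplit (O := O) Θ Θ') (CausFunSet (cseqComp Θ Θ') O)
      (CausFunSet Θ O ×ˢ cseqFamSet Θ Θ' O) := by
  intro G hG
  refine ⟨restrictCF_comp_mem_causFunSet hG (fun h hh => ⟨Or.inl hh, hs.tips_of_mem hh⟩)
    (fun ω h h₂ hc => (hs.constr_cseqComp_iff hc.1 hc.2.1).mpr hc), fun k hk => ?_,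
    fun k hk => by simp [cseqSplit, hk]⟩
  simp only [cseqSplit, if_pos hk]
  exact restrictCF_comp_mem_causFunSet hG
    (fun h hh => ⟨join_mem_cseqComp hk hh, hs.tips_join hk hh⟩)
    (fun ω h h₂ hc => (hs.constr_cseqComp_join_iff hk hc.1 hc.2.1).mpr hc)

theorem leftInvOn_cseqSplit (hs : IsCseqSplit E₁ Θ Θ') :
    Set.LeftInvOn (cseqSplit Θ Θ') (cseqGlue Θ Θ' E₁) (CausFunSet Θ O ×ˢ cseqFamSet Θ Θ' O) := by
  rintro ⟨f, F⟩ ⟨⟨-, hfnorm⟩, hF, hFnorm⟩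
  dsimp only at hfnorm hF hFnorm
  refine Prod.ext (funext fun h => ?_) (funext fun k => ?_)
  · by_cases hh : h ∈ Θ
    · simp [cseqSplit, restrictCF, hh, cseqGlue_of_mem Θ' E₁ _ hh]
    · funext ω
      simp [cseqSplit, restrictCF, hh, hfnorm h hh ω]
  · by_cases hk : k ∈ maxExt Θ
    · funext h
      by_cases hh : h ∈ Θ' k
      · simp [cseqSplit, restrictCF, hk, hh, hs.cseqGlue_join _ hk hh]
      · funext ω
        simp [cseqSplit, restrictCF, hk, hh, (hF k hk).2 h hh ω]
    · simp [cseqSplit, hk, hFnorm k hk]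

theorem rightInvOn_cseqSplit (hs : IsCseqSplit E₁ Θ Θ') :
    Set.RightInvOn (cseqSplit Θ Θ') (cseqGlue Θ Θ' E₁) (CausFunSet (cseqComp Θ Θ') O) := by
  intro G hG
  funext g
  by_cases hg : g ∈ cseqComp Θ Θ'
  · rcases hg with hg | ⟨k, hk, h, hh, rfl⟩
    · simp [cseqGlue_of_mem Θ' E₁ _ hg, cseqSplit, restrictCF, hg]
    · simp [hs.cseqGlue_join _ hk hh, cseqSplit, restrictCF, hk, hh]
  · funext ω
    rw [cseqGlue_of_notMem E₁ _ hg, hG.2 g hg ω]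

end IsCseqSplit

theorem stmt11_general {E : Type} {I O : E → Type}
    (E₁ : Set E) (E₂ : PF E I → Set E)
    (Θ : Set (PF E I)) (Θ' : PF E I → Set (PF E I))
    (hd1 : ∀ h ∈ Θ, dom h ⊆ E₁)
    (hcc' : ∀ k ∈ maxExt Θ, CausallyComplete (Θ' k))
    (hd2 : ∀ k ∈ maxExt Θ, ∀ h ∈ Θ' k, dom h ⊆ E₂ k)
    (hdisj : ∀ k ∈ maxExt Θ, Disjoint E₁ (E₂ k)) :
    Set.BijOn (cseqGlue Θ Θ' E₁)
      ((CausFunSet Θ O) ×ˢ (cseqFamSet Θ Θ' O))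
      (CausFunSet (cseqComp Θ Θ') O) := by
  have hs : IsCseqSplit E₁ Θ Θ' := by
    refine ⟨hd1, fun k hk h hh => ?_, fun k hk h hh => (hdisj k hk).symm.mono_left (hd2 k hk h hh)⟩
    obtain ⟨ω, hω⟩ := hcc' k hk h hh
    exact ⟨ω, (hω.symm ▸ rfl : ω ∈ tips (Θ' k) h).1⟩
  exact Set.InvOn.bijOn ⟨hs.leftInvOn_cseqSplit, hs.rightInvOn_cseqSplit⟩
    hs.mapsTo_cseqGlue hs.mapsTo_cseqSplit

/-- for a causally complete space `Θ` and a family of causally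
complete spaces `Θ'_k`, over sets of events disjoint from those of `Θ`, indexed by the
maximal extended input histories `k` of `Θ`, pairing a causal function for `Θ` with a
family of causal functions for the `Θ'_k` gives a bijection onto the causal functions
of the conditional sequential composition. -/
theorem stmt11 {E : Type} [Fintype E] {I O : E → Type}
    [∀ ω, Nonempty (I ω)] [∀ ω, Nonempty (O ω)]
    (E₁ : Set E) (E₂ : PF E I → Set E)
    (Θ : Set (PF E I)) (Θ' : PF E I → Set (PF E I))
    (hS : IsSpace Θ) (hcc : CausallyComplete Θ)
    (hd1 : ∀ h ∈ Θ, dom h ⊆ E₁)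
    (hS' : ∀ k ∈ maxExt Θ, IsSpace (Θ' k))
    (hcc' : ∀ k ∈ maxExt Θ, CausallyComplete (Θ' k))
    (hd2 : ∀ k ∈ maxExt Θ, ∀ h ∈ Θ' k, dom h ⊆ E₂ k)
    (hdisj : ∀ k ∈ maxExt Θ, Disjoint E₁ (E₂ k)) :
    Set.BijOn (cseqGlue Θ Θ' E₁)
      ((CausFunSet Θ O) ×ˢ (cseqFamSet Θ Θ' O))
      (CausFunSet (cseqComp Θ Θ') O) :=
  stmt11_general E₁ E₂ Θ Θ' hd1 hcc' hd2 hdisj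

end Caus
end

section
/- Let Θ be a space of input histories over (E, I) with output sets O. The assignment of CausFun(λ,O) to each lowerset λ of Θ, with ordinary function restriction as restriction maps, is a well-defined separated presheaf: restrictions of causal functions to lowersets are causal, and every compatible family has at most one gluing. Moreover, a compatible family (f_λ)_{λ∈U} of causal functions indexed by a set U of lowersets of Θ (f_λ ∈ CausFun(λ,O), with f_λ and f_μ agreeing on λ ∩ μ for all λ, μ ∈ U) admits a gluing f̂ ∈ CausFun(⋃U, O) with f̂|_λ = f_λ for all λ ∈ U if and only if the compatible join of the family — the unique function g on ⋃U extending every f_λ — is itself a causal function on ⋃U, in which case g is the gluing. -/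
/-!
The tips of a history are the same in every lowerset containing it, and `Ext μ ⊆ Ext λ` for
`μ ⊆ λ`, so every consistent extended function on `λ` is one on `μ`: histories constrained in
`μ` are constrained in `λ`. Hence restricting a causal function to a smaller lowerset keeps it
causal. A gluing vanishes outside `⋃₀ U` and agrees with each `f_λ` on `λ`, so it is determined
by the family: it can only be the compatible join.
-/

namespace Caus

variable {E : Type} {I O : E → Type}

lemma IsLowersetOf.of_subset {Θ lam mu : Set (PF E I)} (hmu : IsLowersetOf Θ mu)
    (hlam : lam ⊆ Θ) (hsub : mu ⊆ lam) : IsLowersetOf lam mu :=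
  ⟨hsub, fun h hh h' hh' hle => hmu.2 h hh h' (hlam hh') hle⟩

lemma IsLowersetOf.tips_eq {Θ lam : Set (PF E I)} (hl : IsLowersetOf Θ lam) {h : PF E I}
    (hh : h ∈ lam) : tips lam h = tips Θ h := by
  ext ω
  constructor
  · rintro ⟨hdom, hmin⟩
    exact ⟨hdom, fun h' hh' hle hne => hmin h' (hl.2 h hh h' hh' hle) hle hne⟩
  · rintro ⟨hdom, hmin⟩
    exact ⟨hdom, fun h' hh' hle hne => hmin h' (hl.1 hh') hle hne⟩

lemma Ext_mono {lam mu : Set (PF E I)} (hsub : mu ⊆ lam) : Ext mu ⊆ Ext lam := by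
  rintro k ⟨S, hS, hne, hpw, hjoin⟩
  exact ⟨S, hS.trans hsub, hne, hpw, hjoin⟩

lemma IsLowersetOf.constr {lam mu : Set (PF E I)} (hl : IsLowersetOf lam mu) {ω : E}
    {h h' : PF E I} (hc : Constr mu ω h h') : Constr lam ω h h' := by
  obtain ⟨hh, hh', htip, htip', hF⟩ := hc
  refine ⟨hl.1 hh, hl.1 hh', ?_, ?_, ?_⟩
  · rwa [← hl.tips_eq hh]
  · rwa [← hl.tips_eq hh']
  · intro F hext hcons
    exact hF F (fun k hk => hext k (Ext_mono hl.1 hk))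
      (fun k hk k' hk' hle => hcons k (Ext_mono hl.1 hk) k' (Ext_mono hl.1 hk') hle)

lemma restrictCF_of_mem {lam : Set (PF E I)} {f : PF E I → PF E O} {h : PF E I}
    (hh : h ∈ lam) : restrictCF lam f h = f h :=
  if_pos hh

lemma restrictCF_of_notMem {lam : Set (PF E I)} {f : PF E I → PF E O} {h : PF E I}
    (hh : h ∉ lam) : restrictCF lam f h = fun _ => none :=
  if_neg hh

lemma IsLowersetOf.restrictCF_mem_causFunSet {lam mu : Set (PF E I)}
    (hl : IsLowersetOf lam mu) {f : PF E I → PF E O} (hf : f ∈ CausFunSet lam O) :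
    restrictCF mu f ∈ CausFunSet mu O := by
  obtain ⟨⟨hdom, hconstr⟩, -⟩ := hf
  refine ⟨⟨fun h hh => ?_, fun ω h h' hc => ?_⟩, fun h hh ω => ?_⟩
  · rw [restrictCF_of_mem hh, hdom h (hl.1 hh), hl.tips_eq hh]
  · rw [restrictCF_of_mem hc.1, restrictCF_of_mem hc.2.1]
    exact hconstr ω h h' (hl.constr hc)
  · rw [restrictCF_of_notMem hh]

def IsCompatibleJoin (U : Set (Set (PF E I))) (ff : Set (PF E I) → PF E I → PF E O)
    (g : PF E I → PF E O) : Prop :=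
  (∀ lam ∈ U, ∀ h ∈ lam, g h = ff lam h) ∧ ∀ h ∉ ⋃₀ U, ∀ ω : E, g h ω = none

lemma IsCompatibleJoin.unique {U : Set (Set (PF E I))} {ff : Set (PF E I) → PF E I → PF E O}
    {g g' : PF E I → PF E O} (hg : IsCompatibleJoin U ff g) (hg' : IsCompatibleJoin U ff g') :
    g = g' := by
  funext h
  by_cases hh : h ∈ ⋃₀ U
  · obtain ⟨lam, hlam, hhl⟩ := hh
    rw [hg.1 lam hlam h hhl, hg'.1 lam hlam h hhl]
  · funext ω
    rw [hg.2 h hh ω, hg'.2 h hh ω]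

open Classical in
noncomputable def compatibleJoin (U : Set (Set (PF E I)))
    (ff : Set (PF E I) → PF E I → PF E O) : PF E I → PF E O :=
  fun h => if hh : ∃ lam ∈ U, h ∈ lam then ff hh.choose h else fun _ => none

lemma isCompatibleJoin_compatibleJoin {U : Set (Set (PF E I))}
    {ff : Set (PF E I) → PF E I → PF E O}
    (hcompat : ∀ lam ∈ U, ∀ mu ∈ U, ∀ h ∈ lam ∩ mu, ff lam h = ff mu h) :
    IsCompatibleJoin U ff (compatibleJoin U ff) := by
  refine ⟨fun lam hlam h hhl => ?_, fun h hh ω => ?_⟩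
  · have hex : ∃ mu ∈ U, h ∈ mu := ⟨lam, hlam, hhl⟩
    rw [compatibleJoin, dif_pos hex]
    exact hcompat _ hex.choose_spec.1 lam hlam h ⟨hex.choose_spec.2, hhl⟩
  · have hex : ¬∃ mu ∈ U, h ∈ mu := fun ⟨mu, hmu, hhm⟩ => hh ⟨mu, hmu, hhm⟩
    rw [compatibleJoin, dif_neg hex]

theorem stmt14_general {E : Type} {I O : E → Type}
    (Θ : Set (PF E I))
    (U : Set (Set (PF E I)))
    (ff : Set (PF E I) → (PF E I → PF E O))
    (hcompat : ∀ lam ∈ U, ∀ mu ∈ U, ∀ h ∈ lam ∩ mu, ff lam h = ff mu h) :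
    (∀ lam mu : Set (PF E I), IsLowersetOf Θ lam → IsLowersetOf Θ mu → mu ⊆ lam →
      ∀ f ∈ CausFunSet lam O, restrictCF mu f ∈ CausFunSet mu O) ∧
    (∀ g g' : PF E I → PF E O,
      (g ∈ CausFunSet (⋃₀ U) O ∧ ∀ lam ∈ U, ∀ h ∈ lam, g h = ff lam h) →
      (g' ∈ CausFunSet (⋃₀ U) O ∧ ∀ lam ∈ U, ∀ h ∈ lam, g' h = ff lam h) →
      g = g') ∧
    ((∃ g ∈ CausFunSet (⋃₀ U) O, ∀ lam ∈ U, ∀ h ∈ lam, g h = ff lam h) ↔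
      (∀ g : PF E I → PF E O,
        (∀ lam ∈ U, ∀ h ∈ lam, g h = ff lam h) →
        (∀ h ∉ ⋃₀ U, ∀ ω : E, g h ω = none) →
        g ∈ CausFunSet (⋃₀ U) O)) := by
  refine ⟨fun lam mu hlam hmu hsub f hf =>
    (hmu.of_subset hlam.1 hsub).restrictCF_mem_causFunSet hf, ?_, ?_, ?_⟩
  · rintro g g' ⟨hg, hgU⟩ ⟨hg', hg'U⟩
    exact IsCompatibleJoin.unique ⟨hgU, hg.2⟩ ⟨hg'U, hg'.2⟩
  · rintro ⟨g, hg, hgU⟩ g₀ hg₀U hg₀none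
    rwa [IsCompatibleJoin.unique ⟨hg₀U, hg₀none⟩ ⟨hgU, hg.2⟩]
  · intro hjoin
    obtain ⟨hjoinU, hjoinNone⟩ := isCompatibleJoin_compatibleJoin hcompat
    exact ⟨compatibleJoin U ff, hjoin _ hjoinU hjoinNone, hjoinU⟩

/-- the presheaf of causal functions on the lowersets of `Θ` is a
well-defined separated presheaf: restriction of a causal function to a lowerset is
causal, gluings of compatible families are unique, and a compatible family admits a
gluing iff its compatible join is itself a causal function. -/
theorem stmt14 {E : Type} [Fintype E] {I O : E → Type}
    [∀ ω, Nonempty (I ω)] [∀ ω, Nonempty (O ω)]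
    (Θ : Set (PF E I)) (hS : IsSpace Θ)
    (U : Set (Set (PF E I))) (hU : ∀ lam ∈ U, IsLowersetOf Θ lam)
    (ff : Set (PF E I) → (PF E I → PF E O))
    (hff : ∀ lam ∈ U, ff lam ∈ CausFunSet lam O)
    (hcompat : ∀ lam ∈ U, ∀ mu ∈ U, ∀ h ∈ lam ∩ mu, ff lam h = ff mu h) :
    (∀ lam mu : Set (PF E I), IsLowersetOf Θ lam → IsLowersetOf Θ mu → mu ⊆ lam →
      ∀ f ∈ CausFunSet lam O, restrictCF mu f ∈ CausFunSet mu O) ∧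
    (∀ g g' : PF E I → PF E O,
      (g ∈ CausFunSet (⋃₀ U) O ∧ ∀ lam ∈ U, ∀ h ∈ lam, g h = ff lam h) →
      (g' ∈ CausFunSet (⋃₀ U) O ∧ ∀ lam ∈ U, ∀ h ∈ lam, g' h = ff lam h) →
      g = g') ∧
    ((∃ g ∈ CausFunSet (⋃₀ U) O, ∀ lam ∈ U, ∀ h ∈ lam, g h = ff lam h) ↔
      (∀ g : PF E I → PF E O,
        (∀ lam ∈ U, ∀ h ∈ lam, g h = ff lam h) →
        (∀ h ∉ ⋃₀ U, ∀ ω : E, g h ω = none) →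
        g ∈ CausFunSet (⋃₀ U) O)) :=
  stmt14_general Θ U ff hcompat

end Caus
end

section
/- Let Θ be a space of input histories over (E, I), with E finite. Then Θ admits a solipsistic contextuality witness if and only if there exist distinct input histories h, h' ∈ Θ and an event ω ∈ E with h ∼_ω h' such that the set of minimal elements of {k ∈ Ext(Θ) : h ≤ k and h' ≤ k} is not contained in Θ. -/
/-!
Since `Θ ⊆ Ext Θ`, a history `h'' ∈ Θ` with `h, h' ≤ h'' ≤ k` is in particular an upper bound
of `h, h'` in `Ext Θ` below `k`. Over finitely many events every upper bound `k` lies above a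
minimal one, so a witness `k` yields a minimal upper bound outside `Θ`; conversely a minimal
upper bound outside `Θ` is itself a witness, as nothing in `Θ` can fit between it and `h, h'`.
-/

namespace Caus

variable {E : Type} {I O : E → Type}

/-- A solipsistic contextuality witness for `Θ`. -/
def SolWitness (Θ : Set (PF E I)) (k : PF E I) (ω : E) (h h' : PF E I) : Prop :=
  k ∈ Ext Θ ∧ ω ∈ dom k ∧ h ∈ Θ ∧ h' ∈ Θ ∧ h ≠ h' ∧ le h k ∧ le h' k ∧
  Constr Θ ω h h' ∧ ¬ ∃ h'' ∈ Θ, le h h'' ∧ le h' h'' ∧ le h'' k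

namespace le

variable {a b c : PF E I}

lemma refl_s16 (a : PF E I) : le a a := fun _ _ => rfl

lemma trans_s16 (hab : le a b) (hbc : le b c) : le a c := by
  intro ω ha
  rw [hab ω ha, hbc ω (hab ω ha ▸ ha)]

lemma dom_subset (hab : le a b) : dom a ⊆ dom b := by
  intro ω ha
  show (b ω).isSome
  rwa [← hab ω ha]

lemma eq_of_dom_subset (hab : le a b) (hba : dom b ⊆ dom a) : a = b := by
  funext ω
  by_cases ha : (a ω).isSome
  · exact hab ω ha
  · have hb : ¬ (b ω).isSome := fun hb => ha (hba hb)
    rw [Option.not_isSome_iff_eq_none] at ha hb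
    rw [ha, hb]

end le

lemma subset_Ext (Θ : Set (PF E I)) : Θ ⊆ Ext Θ := fun h hh =>
  ⟨{h}, Set.singleton_subset_iff.mpr hh, Set.singleton_nonempty h,
    Set.pairwise_singleton _ _, fun ω x => by simp⟩

/-- Over finitely many events, `≤`-descending chains are finite: a smaller partial function has
a strictly smaller domain. -/
lemma exists_minimal_le [Finite E] {S : Set (PF E I)} {m : PF E I} (hm : m ∈ S) :
    ∃ k ∈ S, le k m ∧ ∀ k' ∈ S, le k' k → k' = k := by
  obtain ⟨k, ⟨hkS, hkm⟩, hmin⟩ := (measure fun k : PF E I => (dom k).ncard).wf.has_min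
    {k | k ∈ S ∧ le k m} ⟨m, hm, le.refl_s16 m⟩
  refine ⟨k, hkS, hkm, fun k' hk'S hk'k => hk'k.eq_of_dom_subset ?_⟩
  by_contra hdom
  have hlt : (dom k').ncard < (dom k).ncard :=
    Set.ncard_lt_ncard (hk'k.dom_subset.ssubset_of_not_subset hdom) (Set.toFinite _)
  exact hmin k' ⟨hk'S, hk'k.trans_s16 hkm⟩ hlt

def IsMinimalUpperBound (Θ : Set (PF E I)) (h h' k : PF E I) : Prop :=
  k ∈ Ext Θ ∧ le h k ∧ le h' k ∧
    ∀ k' : PF E I, k' ∈ Ext Θ → le h k' → le h' k' → le k' k → k' = k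

lemma exists_isMinimalUpperBound_le [Finite E] {Θ : Set (PF E I)} {h h' k : PF E I}
    (hk : k ∈ Ext Θ) (hhk : le h k) (hh'k : le h' k) :
    ∃ k₀, IsMinimalUpperBound Θ h h' k₀ ∧ le k₀ k := by
  obtain ⟨k₀, ⟨hk₀, hhk₀, hh'k₀⟩, hk₀k, hmin⟩ :=
    exists_minimal_le (S := {k | k ∈ Ext Θ ∧ le h k ∧ le h' k}) ⟨hk, hhk, hh'k⟩
  exact ⟨k₀, ⟨hk₀, hhk₀, hh'k₀, fun k' hk' hhk' hh'k' => hmin k' ⟨hk', hhk', hh'k'⟩⟩, hk₀k⟩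

lemma solWitness_of_isMinimalUpperBound {Θ : Set (PF E I)} {ω : E} {h h' k : PF E I}
    (hc : Constr Θ ω h h') (hne : h ≠ h') (hk : IsMinimalUpperBound Θ h h' k) (hkΘ : k ∉ Θ) :
    SolWitness Θ k ω h h' := by
  obtain ⟨hkE, hhk, hh'k, hmin⟩ := hk
  refine ⟨hkE, hhk.dom_subset hc.2.2.1.1, hc.1, hc.2.1, hne, hhk, hh'k, hc, ?_⟩
  rintro ⟨h'', hh'', hhh'', hh'h'', hh''k⟩
  exact hkΘ (hmin h'' (subset_Ext Θ hh'') hhh'' hh'h'' hh''k ▸ hh'')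

lemma SolWitness.exists_isMinimalUpperBound_not_mem [Finite E] {Θ : Set (PF E I)} {ω : E}
    {h h' k : PF E I} (hw : SolWitness Θ k ω h h') :
    ∃ k₀, IsMinimalUpperBound Θ h h' k₀ ∧ k₀ ∉ Θ := by
  obtain ⟨hkE, -, -, -, -, hhk, hh'k, -, hno⟩ := hw
  obtain ⟨k₀, hk₀, hk₀k⟩ := exists_isMinimalUpperBound_le hkE hhk hh'k
  exact ⟨k₀, hk₀, fun hk₀Θ => hno ⟨k₀, hk₀Θ, hk₀.2.1, hk₀.2.2.1, hk₀k⟩⟩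

theorem stmt16_general {E : Type} [Fintype E] {I : E → Type}
    (Θ : Set (PF E I)) :
    (∃ (k : PF E I) (ω : E) (h h' : PF E I), SolWitness Θ k ω h h') ↔
    ∃ h h' : PF E I, h ∈ Θ ∧ h' ∈ Θ ∧ h ≠ h' ∧
      (∃ ω : E, Constr Θ ω h h') ∧
      ∃ k : PF E I,
        (k ∈ Ext Θ ∧ le h k ∧ le h' k ∧
          ∀ k' : PF E I, k' ∈ Ext Θ → le h k' → le h' k' → le k' k → k' = k) ∧
        k ∉ Θ := by
  constructor
  · rintro ⟨k, ω, h, h', hw⟩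
    have hk₀ := hw.exists_isMinimalUpperBound_not_mem
    obtain ⟨-, -, hhΘ, hh'Θ, hne, -, -, hc, -⟩ := hw
    exact ⟨h, h', hhΘ, hh'Θ, hne, ⟨ω, hc⟩, hk₀⟩
  · rintro ⟨h, h', -, -, hne, ⟨ω, hc⟩, k, hk, hkΘ⟩
    exact ⟨k, ω, h, h', solWitness_of_isMinimalUpperBound hc hne hk hkΘ⟩

/-- `Θ` admits a solipsistic contextuality witness iff there are
distinct histories `h ∼_ω h'` such that the minimal extended input histories above
both `h` and `h'` are not all contained in `Θ`. -/
theorem stmt16 {E : Type} [Fintype E] {I : E → Type} [∀ ω, Nonempty (I ω)]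
    (Θ : Set (PF E I)) (hS : IsSpace Θ) :
    (∃ (k : PF E I) (ω : E) (h h' : PF E I), SolWitness Θ k ω h h') ↔
    ∃ h h' : PF E I, h ∈ Θ ∧ h' ∈ Θ ∧ h ≠ h' ∧
      (∃ ω : E, Constr Θ ω h h') ∧
      ∃ k : PF E I,
        (k ∈ Ext Θ ∧ le h k ∧ le h' k ∧
          ∀ k' : PF E I, k' ∈ Ext Θ → le h k' → le h' k' → le k' k → k' = k) ∧
        k ∉ Θ :=
  stmt16_general Θ

end Caus
end
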